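/- arXiv:2101.08110 — 2 statements merged into one kernel-verified Lean document; each statement's English description precedes it below -/
import Mathlib

section
/- Let p₀, …, p_r ∈ ℂ be pairwise distinct and g a function on {p₀,…,p_r}. Then g has a polynomial interpolant of degree at most d (where d ≤ r) if and only if for every polynomial h of degree at most r − d − 1, the r-th divided difference of the product satisfies (g·h)[p₀,…,p_r] = 0. -/
/-!
A divided difference over nodes `s` is the coefficient of `X ^ (#s - 1)` of the Lagrange
interpolant (`Lagrange.coeff_eq_sum`), so it kills polynomials of degree `< #s - 1`; as `G * h`
has degree `< r`, this gives the forward direction. Conversely, taking for `h` the nodal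
polynomial of `p₀, …, p_{k-1}` turns `(g·h)[p₀,…,p_r]` into `g[p_k,…,p_r]`, so these vanish for
`k < r - d`. The interpolant `G` of `g` at `p_{r-d}, …, p_r` has degree `≤ d`, so
`G[p_k,…,p_r]` vanishes as well; since a divided difference determines the value at one node
from the values at the others, downward induction on `k` gives `G (p k) = g (p k)`.
-/

open Polynomial Finset Lagrange

/-- The k-th divided difference f[p₀,…,p_k] for pairwise distinct nodes. -/
noncomputable def divDiff (f : ℂ → ℂ) (p : ℕ → ℂ) (k : ℕ) : ℂ :=
  ∑ j ∈ Finset.range (k+1),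
    f (p j) / ∏ i ∈ (Finset.range (k+1)).erase j, (p j - p i)

section DivDiffOn

variable {F : Type*} [Field F] {ι : Type*} [DecidableEq ι] {s t u : Finset ι} {v : ι → F}

def divDiffOn (s : Finset ι) (v : ι → F) (y : ι → F) : F :=
  ∑ j ∈ s, y j / ∏ i ∈ s.erase j, (v j - v i)

theorem divDiffOn_eval_eq_zero (hv : Set.InjOn v s) {q : F[X]} (hq : q.degree < (#s - 1 : ℕ)) :
    divDiffOn s v (fun j => q.eval (v j)) = 0 := by
  rw [divDiffOn, ← coeff_eq_sum hv (hq.trans_le (by exact_mod_cast Nat.sub_le _ _))]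
  exact coeff_eq_zero_of_degree_lt hq

theorem divDiffOn_congr {y z : ι → F} (h : ∀ j ∈ s, y j = z j) :
    divDiffOn s v y = divDiffOn s v z :=
  sum_congr rfl fun j hj => by rw [h j hj]

theorem prod_sub_ne_zero_of_notMem {j : ι} (hv : Set.InjOn v ↑(insert j t)) (hj : j ∉ t) :
    ∏ i ∈ t, (v j - v i) ≠ 0 :=
  prod_ne_zero_iff.mpr fun i hi => sub_ne_zero_of_ne fun h =>
    hj (hv.eq_iff (by simp) (by simp [hi]) |>.mp h ▸ hi)

theorem divDiffOn_union_mul_nodal (htu : Disjoint t u) (hv : Set.InjOn v ↑(t ∪ u)) (y : ι → F) :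
    divDiffOn (t ∪ u) v (fun j => y j * (nodal t v).eval (v j)) = divDiffOn u v y := by
  rw [divDiffOn, sum_union htu, sum_eq_zero fun j hj => by simp [eval_nodal_at_node hj], zero_add]
  refine sum_congr rfl fun j hj => ?_
  have hjt : j ∉ t := disjoint_right.mp htu hj
  rw [erase_union_distrib, erase_eq_of_notMem hjt, prod_union (htu.mono_right (erase_subset j u)),
    eval_nodal, mul_comm (∏ x ∈ t, _),
    mul_div_mul_right _ _ (prod_sub_ne_zero_of_notMem (hv.mono ?_) hjt)]
  exact coe_subset.mpr (insert_subset (mem_union_right t hj) subset_union_left)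

theorem eq_of_divDiffOn_insert_eq {k : ι} {y z : ι → F} (hk : k ∉ u)
    (hv : Set.InjOn v ↑(insert k u)) (hyz : ∀ j ∈ u, y j = z j)
    (h : divDiffOn (insert k u) v y = divDiffOn (insert k u) v z) :
    y k = z k := by
  rw [divDiffOn, divDiffOn, sum_insert hk, sum_insert hk, erase_insert hk,
    sum_congr rfl fun j hj => by rw [hyz j hj], add_left_inj,
    div_left_inj' (prod_sub_ne_zero_of_notMem hv hk)] at h
  exact h

end DivDiffOn

theorem exists_natDegree_le_eval_eq_of_divDiffOn_Icc_eq_zero {F : Type*} [Field F] {r d : ℕ}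
    {p : ℕ → F} (hp : Set.InjOn p (Set.Iic r)) {y : ℕ → F}
    (H : ∀ k < r - d, divDiffOn (Icc k r) p y = 0) :
    ∃ G : F[X], G.natDegree ≤ d ∧ ∀ j ≤ r, G.eval (p j) = y j := by
  have hinj : ∀ k, Set.InjOn p ↑(Icc k r) := fun k => hp.mono fun i hi => (mem_Icc.mp hi).2
  set G := interpolate (Icc (r - d) r) p y
  have hG : G.degree ≤ d :=
    (degree_interpolate_le y (hinj _)).trans (by rw [Nat.card_Icc]; norm_cast; omega)
  suffices ∀ k ≤ r - d, ∀ j ∈ Icc k r, G.eval (p j) = y j from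
    ⟨G, natDegree_le_iff_degree_le.mpr hG, fun j hj => this 0 (Nat.zero_le _) j (by simpa using hj)⟩
  intro k hk
  induction hk using Nat.decreasingInduction with
  | self => exact fun j hj => eval_interpolate_at_node y (hinj _) hj
  | of_succ k hk ih =>
    have hkr : k ≤ r := by omega
    have hins := insert_Icc_add_one_left_eq_Icc hkr
    have hvk : Set.InjOn p ↑(insert k (Icc (k + 1) r)) := hins ▸ hinj k
    rw [← hins, forall_mem_insert]
    refine ⟨eq_of_divDiffOn_insert_eq (by simp) hvk ih ?_, ih⟩
    rw [hins, H k hk, divDiffOn_eval_eq_zero (hinj k)]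
    exact hG.trans_lt (by rw [Nat.card_Icc]; norm_cast; omega)

theorem divDiff_eq_divDiffOn (f : ℂ → ℂ) (p : ℕ → ℂ) (r : ℕ) :
    divDiff f p r = divDiffOn (range (r + 1)) p (fun j => f (p j)) :=
  rfl

theorem divDiff_mul_eval_eq_zero {r d : ℕ} {p : ℕ → ℂ} (hp : Set.InjOn p (Set.Iic r))
    {g : ℂ → ℂ} {G h : ℂ[X]} (hG : G.natDegree ≤ d) (hGg : ∀ j ≤ r, G.eval (p j) = g (p j))
    (hh : h.degree < (r - d : ℕ)) :
    divDiff (fun z => g z * h.eval z) p r = 0 := by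
  have hGh : (G * h).degree < (#(range (r + 1)) - 1 : ℕ) := by
    rcases eq_or_ne h 0 with rfl | h0
    · simp
    have := (natDegree_lt_iff_degree_lt h0).mpr hh
    rw [card_range, Nat.add_sub_cancel]
    exact degree_le_natDegree.trans_lt (by norm_cast; exact natDegree_mul_le.trans_lt (by omega))
  rw [divDiff_eq_divDiffOn, ← divDiffOn_eval_eq_zero (hp.mono fun i hi => ?_) hGh]
  · refine divDiffOn_congr fun j hj => ?_
    rw [eval_mul, hGg j (Nat.lt_succ_iff.mp (mem_range.mp hj))]
  · exact Nat.lt_succ_iff.mp (mem_range.mp hi)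

theorem divDiff_mul_nodal_range {r k : ℕ} (hk : k ≤ r) {p : ℕ → ℂ} (hp : Set.InjOn p (Set.Iic r))
    (g : ℂ → ℂ) :
    divDiff (fun z => g z * (nodal (range k) p).eval z) p r =
      divDiffOn (Icc k r) p (fun j => g (p j)) := by
  have hsplit : range (r + 1) = range k ∪ Icc k r := by
    ext i; simp only [mem_range, mem_union, mem_Icc]; omega
  rw [divDiff_eq_divDiffOn, hsplit, divDiffOn_union_mul_nodal]
  · exact disjoint_left.mpr fun i hi hi' => by simp only [mem_range, mem_Icc] at hi hi'; omega
  · rw [← hsplit]; exact hp.mono fun i hi => Nat.lt_succ_iff.mp (mem_range.mp hi)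

theorem stmt_7_general (r d : ℕ) (p : ℕ → ℂ)
    (hp : ∀ i ≤ r, ∀ j ≤ r, p i = p j → i = j) (g : ℂ → ℂ) :
    (∃ G : Polynomial ℂ, G.natDegree ≤ d ∧ ∀ j ≤ r, G.eval (p j) = g (p j)) ↔
    ∀ h : Polynomial ℂ, h.degree < ((r - d : ℕ) : WithBot ℕ) →
      divDiff (fun z => g z * h.eval z) p r = 0 := by
  have hinj : Set.InjOn p (Set.Iic r) := fun i hi j hj => hp i hi j hj
  constructor
  · rintro ⟨G, hG, hGg⟩ h hh
    exact divDiff_mul_eval_eq_zero hinj hG hGg hh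
  · intro H
    refine exists_natDegree_le_eval_eq_of_divDiffOn_Icc_eq_zero hinj fun k hk => ?_
    rw [← divDiff_mul_nodal_range (by omega) hinj]
    exact H _ (by rw [degree_nodal, card_range]; exact_mod_cast hk)

/-- g has a polynomial interpolant of degree at most d (d ≤ r) iff
(g·h)[p₀,…,p_r] = 0 for all polynomials h of degree at most r − d − 1. -/
theorem stmt_7 (r d : ℕ) (hd : d ≤ r) (p : ℕ → ℂ)
    (hp : ∀ i ≤ r, ∀ j ≤ r, p i = p j → i = j) (g : ℂ → ℂ) :
    (∃ G : Polynomial ℂ, G.natDegree ≤ d ∧ ∀ j ≤ r, G.eval (p j) = g (p j)) ↔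
    ∀ h : Polynomial ℂ, h.degree < ((r - d : ℕ) : WithBot ℕ) →
      divDiff (fun z => g z * h.eval z) p r = 0 :=
  stmt_7_general r d p hp g
end

section
/- Let q = ∏_{j=0}^r (ζ − p_j) with the p_j not necessarily distinct, and let g ∈ ℂ[ζ]/(q). Define the generalized divided difference g[p₀,…,p_r] as the coefficient of ζ^r in the unique representative polynomial of g of degree at most r. Then g has a polynomial interpolant (i.e., a representative) of degree at most d if and only if (g·h)[p₀,…,p_r] = 0 for all polynomials h with deg h ≤ r − d − 1, where g·h is the product in ℂ[ζ]/(q). -/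
/-!
Let `R = g %ₘ q`, the representative of degree `≤ r`. If `G` is an interpolant of degree `≤ d` and
`deg h < r - d`, then `G * h` has degree `< r`, so it is already reduced mod `q` and has no `X ^ r`
coefficient. Conversely, for `k < r - d` a product `R * X ^ k` of degree `≤ r` is already reduced, and
its `X ^ r` coefficient is the `X ^ (r - k)` coefficient of `R`; testing against `h = X ^ k` for
`k = 0, 1, …` therefore kills the coefficients of `R` from the top down to degree `d + 1`.
-/

namespace Polynomial

variable {A : Type*} [CommRing A] {q : A[X]}

lemma modByMonic_eq_self_of_natDegree_lt {p : A[X]} (hq : q.Monic)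
    (h : p.natDegree < q.natDegree) : p %ₘ q = p := by
  nontriviality A
  exact (modByMonic_eq_self_iff hq).2 (degree_lt_degree h)

lemma mul_modByMonic_eq_of_dvd_sub {f g : A[X]} (hq : q.Monic) (h : q ∣ f - g) (k : A[X]) :
    (f * k) %ₘ q = (g * k) %ₘ q :=
  modByMonic_eq_of_dvd_sub hq (by rw [← sub_mul]; exact h.mul_right k)

variable {r : ℕ}

lemma natDegree_le_sub_of_coeff_modByMonic_mul_X_pow {R : A[X]} (hq : q.Monic)
    (hqr : q.natDegree = r + 1) (hR : R.natDegree ≤ r) {m : ℕ}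
    (h : ∀ k < m, ((R * X ^ k) %ₘ q).coeff r = 0) : R.natDegree ≤ r - m := by
  induction m with
  | zero => exact hR
  | succ m ih =>
    have hRm := ih fun k hk => h k (hk.trans m.lt_succ_self)
    rcases le_or_gt m r with hmr | hrm
    · have hreduced : (R * X ^ m) %ₘ q = R * X ^ m := by
        refine modByMonic_eq_self_of_natDegree_lt hq ?_
        have := natDegree_mul_le (p := R) (q := X ^ m)
        have := natDegree_X_pow_le (R := A) m
        omega
      have hcoeff := h m m.lt_succ_self
      rw [hreduced, show r = r - m + m by omega, coeff_mul_X_pow] at hcoeff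
      exact (natDegree_le_pred hRm hcoeff).trans (by omega)
    · omega

theorem exists_natDegree_le_dvd_sub_iff (hq : q.Monic) (hqr : q.natDegree = r + 1)
    (d : ℕ) (g : A[X]) :
    (∃ G : A[X], G.natDegree ≤ d ∧ q ∣ G - g) ↔
      ∀ h : A[X], h.degree < ((r - d : ℕ) : WithBot ℕ) → ((g * h) %ₘ q).coeff r = 0 := by
  constructor
  · rintro ⟨G, hG, hGg⟩ h hh
    obtain rfl | h0 := eq_or_ne h 0
    · simp
    have hGh : (G * h).natDegree < r :=
      natDegree_mul_le.trans_lt (by have := (natDegree_lt_iff_degree_lt h0).2 hh; omega)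
    rw [mul_modByMonic_eq_of_dvd_sub hq (dvd_sub_comm.1 hGg) h,
      modByMonic_eq_self_of_natDegree_lt hq (by omega), coeff_eq_zero_of_natDegree_lt hGh]
  · intro H
    refine ⟨g %ₘ q, ?_, dvd_modByMonic_sub g q⟩
    have hR : (g %ₘ q).natDegree ≤ r := by
      have := natDegree_modByMonic_lt g hq (fun h1 => by simp [h1] at hqr)
      omega
    refine (natDegree_le_sub_of_coeff_modByMonic_mul_X_pow hq hqr hR fun k hk => ?_).trans
      (by omega : r - (r - d) ≤ d)
    rw [mul_modByMonic_eq_of_dvd_sub hq (dvd_modByMonic_sub g q)]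
    exact H _ ((degree_X_pow_le k).trans_lt (by exact_mod_cast hk))

end Polynomial

theorem stmt_18_general (r d : ℕ) (p : ℕ → ℂ) (g : Polynomial ℂ) :
    (∃ G : Polynomial ℂ, G.natDegree ≤ d ∧
      (∏ j ∈ Finset.range (r+1), (Polynomial.X - Polynomial.C (p j))) ∣ (G - g)) ↔
    ∀ h : Polynomial ℂ, h.degree < ((r - d : ℕ) : WithBot ℕ) →
      ((g * h) %ₘ ∏ j ∈ Finset.range (r+1),
        (Polynomial.X - Polynomial.C (p j))).coeff r = 0 :=
  Polynomial.exists_natDegree_le_dvd_sub_iff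
    (Polynomial.monic_prod_of_monic _ _ fun j _ => Polynomial.monic_X_sub_C (p j))
    (by simp [Polynomial.natDegree_prod_of_monic, Polynomial.monic_X_sub_C]) d g

/-- For q = ∏_{j=0}^r (ζ − p_j) (nodes not necessarily distinct), define the
generalized divided difference of a class mod q as the ζ^r-coefficient of its
unique representative of degree ≤ r (the remainder on division by the monic q).
Then g has a representative of degree ≤ d iff (g·h)[p₀,…,p_r] = 0 for all
polynomials h of degree ≤ r − d − 1. -/
theorem stmt_18 (r d : ℕ) (hd : d ≤ r) (p : ℕ → ℂ) (g : Polynomial ℂ) :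
    (∃ G : Polynomial ℂ, G.natDegree ≤ d ∧
      (∏ j ∈ Finset.range (r+1), (Polynomial.X - Polynomial.C (p j))) ∣ (G - g)) ↔
    ∀ h : Polynomial ℂ, h.degree < ((r - d : ℕ) : WithBot ℕ) →
      ((g * h) %ₘ ∏ j ∈ Finset.range (r+1),
        (Polynomial.X - Polynomial.C (p j))).coeff r = 0 :=
  stmt_18_general r d p g
end
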